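/- The map Ξ conjugates the matrix Kac–Schwarz operator into the scalar one: for every f : Fin n → ℤ → ℂ, Ξ(R_𝔤 f) = R̃_n (Ξ f), where R_𝔤 and R̃_n are defined coefficientwise by (R_𝔤 f) α k := (k+1)·f α (k+1) + (1/n)·(α − (n−1)/2)·f α (k+1) − (Λf) α k, with (Λf) 0 k := f (n−1) (k−1) and (Λf) α k := f (α−1) k for α ≥ 1, and (R̃_n g)(m) := ((2m + n + 1)/(2n))·g(m+n) − g(m−1). -/
import Mathlib


/-- The map `Ξ : (Fin n → ℤ → ℂ) → (ℤ → ℂ)` defined by `Ξ(f)(n·q + r) = f r q` for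
`q ∈ ℤ`, `0 ≤ r < n`; it encodes the substitution
`Ξ(f)(ζ) = f₀(ζⁿ) + ζ f₁(ζⁿ) + ⋯ + ζ^{n−1} f_{n−1}(ζⁿ)`. -/
def Xi {n : ℕ} (hn : 0 < n) (f : Fin n → ℤ → ℂ) : ℤ → ℂ := fun m =>
  f ⟨(m % (n : ℤ)).toNat, by
      have h1 : (0 : ℤ) < (n : ℤ) := by exact_mod_cast hn
      have h2 := Int.emod_nonneg m (ne_of_gt h1)
      have h3 := Int.emod_lt_of_pos m h1
      omega⟩
    (m / (n : ℤ))

/-- The coefficientwise action of multiplication by the cyclic element `Λ(z)` of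
`A_{n−1}^{(1)}`: `(Λf) 0 k = f (n−1) (k−1)` and `(Λf) α k = f (α−1) k` for `α ≥ 1`. -/
def LamOp {n : ℕ} (f : Fin n → ℤ → ℂ) : Fin n → ℤ → ℂ := fun α k =>
  if (α : ℕ) = 0 then f ⟨n - 1, by have := α.isLt; omega⟩ (k - 1)
  else f ⟨(α : ℕ) - 1, by have := α.isLt; omega⟩ k

/-- The matrix Kac–Schwarz operator `R_𝔤 = d/dz + ρ/(nz) − Λ` in coefficientwise form:
`(R_𝔤 f) α k = (k+1)·f α (k+1) + (1/n)(α − (n−1)/2)·f α (k+1) − (Λf) α k`. -/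
noncomputable def Rg {n : ℕ} (f : Fin n → ℤ → ℂ) : Fin n → ℤ → ℂ := fun α k =>
  ((k : ℂ) + 1) * f α (k + 1) +
    (1 / (n : ℂ)) * (((α : ℕ) : ℂ) - ((n : ℂ) - 1) / 2) * f α (k + 1) -
    LamOp f α k

/-- The scalar Kac–Schwarz operator `R̃_n = (1/(nζ^{n−1})) d/dζ − (n−1)/(2nζⁿ) − ζ` in
coefficientwise form: `(R̃_n g)(m) = ((2m + n + 1)/(2n))·g(m+n) − g(m−1)`. -/
noncomputable def Rtilde (n : ℕ) (g : ℤ → ℂ) : ℤ → ℂ := fun m =>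
  ((2 * (m : ℂ) + (n : ℂ) + 1) / (2 * (n : ℂ))) * g (m + (n : ℤ)) - g (m - 1)

lemma key_emod (n q r : ℤ) (h0 : 0 ≤ r) (h1 : r < n) :
    (n * q + r) % n = r := by
  rw [add_comm, Int.add_mul_emod_self_left, Int.emod_eq_of_lt h0 h1]

lemma key_ediv (n q r : ℤ) (h0 : 0 ≤ r) (h1 : r < n) :
    (n * q + r) / n = q := by
  have hn : n ≠ 0 := by omega
  rw [add_comm, Int.add_mul_ediv_left _ _ hn, Int.ediv_eq_zero_of_lt h0 h1, zero_add]

/-- `Ξ` conjugates the matrix Kac–Schwarz operator into the scalar one: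
`Ξ(R_𝔤 f) = R̃_n (Ξ f)` for every `f : Fin n → ℤ → ℂ`. -/
theorem stmt_13 (n : ℕ) (hn : 2 ≤ n) (f : Fin n → ℤ → ℂ) :
    Xi (show 0 < n by omega) (Rg f) = Rtilde n (Xi (show 0 < n by omega) f) := by
  funext m
  have hn0 : (0 : ℤ) < (n : ℤ) := by exact_mod_cast (by omega : 0 < n)
  have hnC : (n : ℂ) ≠ 0 := by exact_mod_cast (by omega : n ≠ 0)
  obtain ⟨q, r, hr0, hrn, rfl⟩ : ∃ q r, 0 ≤ r ∧ r < (n : ℤ) ∧ m = (n : ℤ) * q + r :=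
    ⟨m / n, m % n, Int.emod_nonneg m hn0.ne', Int.emod_lt_of_pos m hn0, (Int.mul_ediv_add_emod m n).symm⟩
  have e1 : ((n : ℤ) * q + r) % n = r := key_emod _ _ _ hr0 hrn
  have e2 : ((n : ℤ) * q + r) / n = q := key_ediv _ _ _ hr0 hrn
  have e3 : ((n : ℤ) * q + r + n) % n = r := by
    rw [show (n : ℤ) * q + r + n = n * (q + 1) + r by ring]; exact key_emod _ _ _ hr0 hrn
  have e4 : ((n : ℤ) * q + r + n) / n = q + 1 := by
    rw [show (n : ℤ) * q + r + n = n * (q + 1) + r by ring]; exact key_ediv _ _ _ hr0 hrn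
  have hrtoNat : ((r.toNat : ℕ) : ℂ) = (r : ℂ) :=
    mod_cast congrArg (fun x : ℤ => (x : ℂ)) (Int.toNat_of_nonneg hr0)
  by_cases hr : r = 0
  · subst hr
    have e5 : ((n : ℤ) * q + 0 - 1) % n = (n : ℤ) - 1 := by
      rw [show (n : ℤ) * q + 0 - 1 = n * (q - 1) + (n - 1) by ring]
      exact key_emod _ _ _ (by omega) (by omega)
    have e6 : ((n : ℤ) * q + 0 - 1) / n = q - 1 := by
      rw [show (n : ℤ) * q + 0 - 1 = n * (q - 1) + (n - 1) by ring]
      exact key_ediv _ _ _ (by omega) (by omega)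
    simp only [Xi, Rg, Rtilde, LamOp, e1, e2, e3, e4, e5, e6, Int.toNat_zero,
      show ((n : ℤ) - 1).toNat = n - 1 by omega]
    simp only [if_pos rfl, Nat.cast_zero]
    push_cast
    field_simp
    ring
  · have e5 : ((n : ℤ) * q + r - 1) % n = r - 1 := by
      rw [show (n : ℤ) * q + r - 1 = n * q + (r - 1) by ring]
      exact key_emod _ _ _ (by omega) (by omega)
    have e6 : ((n : ℤ) * q + r - 1) / n = q := by
      rw [show (n : ℤ) * q + r - 1 = n * q + (r - 1) by ring]
      exact key_ediv _ _ _ (by omega) (by omega)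
    have htn : r.toNat ≠ 0 := by omega
    simp only [Xi, Rg, Rtilde, LamOp, e1, e2, e3, e4, e5, e6,
      show (r - 1).toNat = r.toNat - 1 by omega]
    simp only [if_neg htn, hrtoNat]
    push_cast
    field_simp
    ring
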